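/- arXiv:1903.10577 — 2 statements merged into one kernel-verified Lean document; each statement's English description precedes it below -/
import Mathlib

section
/- In the canonical model of Λ, Γ_α^w ⊆ w if and only if the choice cell Choice_α(w) belongs to S-Optimal (is undominated in the subjective dominance ordering ≺_s over the choice cells at the R_□-class of w). -/
/-- Formulas of the language `L_KO`, with operators `□`, `[α]`, `K_α`,
`⊙[α]` (objective ought) and `⊙_S[α]` (subjective ought). -/
inductive Form (Ags : Type) : Type
  | atom : Nat → Form Ags
  | bot  : Form Ags
  | imp  : Form Ags → Form Ags → Form Ags
  | box  : Form Ags → Form Ags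
  | act  : Ags → Form Ags → Form Ags
  | know : Ags → Form Ags → Form Ags
  | obj  : Ags → Form Ags → Form Ags
  | subj : Ags → Form Ags → Form Ags

namespace Form

variable {Ags : Type}

def neg (φ : Form Ags) : Form Ags := imp φ bot
def dia (φ : Form Ags) : Form Ags := neg (box (neg φ))
def conj (φ ψ : Form Ags) : Form Ags := neg (imp φ (neg ψ))
def disj (φ ψ : Form Ags) : Form Ags := imp (neg φ) ψ
def conjl : List (Form Ags) → Form Ags
  | [] => neg bot
  | φ :: l => conj φ (conjl l)

end Form

open Form

/-- The Hilbert-style proof system `Λ`. -/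
inductive Prov {Ags : Type} : Form Ags → Prop
  | pl1 (φ ψ : Form Ags) : Prov (imp φ (imp ψ φ))
  | pl2 (φ ψ χ : Form Ags) :
      Prov (imp (imp φ (imp ψ χ)) (imp (imp φ ψ) (imp φ χ)))
  | pl3 (φ ψ : Form Ags) : Prov (imp (imp (neg φ) (neg ψ)) (imp ψ φ))
  | mp {φ ψ : Form Ags} : Prov (imp φ ψ) → Prov φ → Prov ψ
  -- S5 axioms and necessitation for □
  | boxK (φ ψ : Form Ags) : Prov (imp (box (imp φ ψ)) (imp (box φ) (box ψ)))
  | boxT (φ : Form Ags) : Prov (imp (box φ) φ)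
  | box4 (φ : Form Ags) : Prov (imp (box φ) (box (box φ)))
  | box5 (φ : Form Ags) : Prov (imp (dia φ) (box (dia φ)))
  | boxNec {φ : Form Ags} : Prov φ → Prov (box φ)
  -- S5 axioms and necessitation for [α]
  | actK (a : Ags) (φ ψ : Form Ags) :
      Prov (imp (act a (imp φ ψ)) (imp (act a φ) (act a ψ)))
  | actT (a : Ags) (φ : Form Ags) : Prov (imp (act a φ) φ)
  | act4 (a : Ags) (φ : Form Ags) : Prov (imp (act a φ) (act a (act a φ)))
  | act5 (a : Ags) (φ : Form Ags) :
      Prov (imp (neg (act a φ)) (act a (neg (act a φ))))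
  | actNec {φ : Form Ags} (a : Ags) : Prov φ → Prov (act a φ)
  -- S5 axioms and necessitation for K_α
  | knowK (a : Ags) (φ ψ : Form Ags) :
      Prov (imp (know a (imp φ ψ)) (imp (know a φ) (know a ψ)))
  | knowT (a : Ags) (φ : Form Ags) : Prov (imp (know a φ) φ)
  | know4 (a : Ags) (φ : Form Ags) : Prov (imp (know a φ) (know a (know a φ)))
  | know5 (a : Ags) (φ : Form Ags) :
      Prov (imp (neg (know a φ)) (know a (neg (know a φ))))
  | knowNec {φ : Form Ags} (a : Ags) : Prov φ → Prov (know a φ)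
  -- deontic-epistemic axioms
  | a1 (a : Ags) (φ ψ : Form Ags) :
      Prov (imp (obj a (imp φ ψ)) (imp (obj a φ) (obj a ψ)))
  | a2 (a : Ags) (φ : Form Ags) :
      Prov (imp (box φ) (conj (act a φ) (obj a φ)))
  | a3 (a : Ags) (φ : Form Ags) :
      Prov (disj (box (obj a φ)) (box (neg (obj a φ))))
  | a4 (a : Ags) (φ : Form Ags) : Prov (imp (obj a φ) (obj a (act a φ)))
  | oic (a : Ags) (φ : Form Ags) : Prov (imp (obj a φ) (dia (act a φ)))
  | ia (l : List (Ags × Form Ags)) (h : l.Pairwise fun p q => p.1 ≠ q.1) :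
      Prov (imp (conjl (l.map fun p => dia (act p.1 p.2)))
                (dia (conjl (l.map fun p => act p.1 p.2))))
  | a5 (a : Ags) (φ ψ : Form Ags) :
      Prov (imp (subj a (imp φ ψ)) (imp (subj a φ) (subj a ψ)))
  | a6 (a : Ags) (φ : Form Ags) : Prov (imp (subj a φ) (subj a (know a φ)))
  | oacAx (a : Ags) (φ : Form Ags) : Prov (imp (know a φ) (act a φ))
  | unifH (a : Ags) (φ : Form Ags) :
      Prov (imp (dia (know a φ)) (know a (dia φ)))
  | sN (a : Ags) (φ : Form Ags) : Prov (imp (know a (box φ)) (subj a φ))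
  | sOic (a : Ags) (φ : Form Ags) : Prov (imp (subj a φ) (dia (know a φ)))
  | clAx (a : Ags) (φ : Form Ags) :
      Prov (imp (subj a φ) (know a (box (subj a φ))))
  | objNec {φ : Form Ags} (a : Ags) : Prov φ → Prov (obj a φ)
  | subjNec {φ : Form Ags} (a : Ags) : Prov φ → Prov (subj a φ)

/-- `Λ`-consistency of a set of formulas. -/
def Consistent {Ags : Type} (Γ : Set (Form Ags)) : Prop :=
  ¬ ∃ l : List (Form Ags), (∀ φ ∈ l, φ ∈ Γ) ∧ Prov (imp (conjl l) bot)

/-- Maximal `Λ`-consistent set. -/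
def MCS {Ags : Type} (w : Set (Form Ags)) : Prop :=
  Consistent w ∧ ∀ φ : Form Ags, φ ∈ w ∨ neg φ ∈ w

/-- Canonical relation for `□`. -/
def RboxC {Ags : Type} (w v : Set (Form Ags)) : Prop :=
  ∀ φ : Form Ags, box φ ∈ w → φ ∈ v

/-- Canonical relation for `[α]`. -/
def RactC {Ags : Type} (a : Ags) (w v : Set (Form Ags)) : Prop :=
  ∀ φ : Form Ags, act a φ ∈ w → φ ∈ v

/-- Canonical relation for `K_α`. -/
def RknowC {Ags : Type} (a : Ags) (w v : Set (Form Ags)) : Prop :=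
  ∀ φ : Form Ags, know a φ ∈ w → φ ∈ v

/-- `Σ_α^w = {[α]φ : ⊙[α]φ ∈ w}`. -/
def SigmaSet {Ags : Type} (a : Ags) (w : Set (Form Ags)) : Set (Form Ags) :=
  {ψ | ∃ φ, ψ = act a φ ∧ obj a φ ∈ w}

/-- `Γ_α^w = {K_αφ : ⊙_S[α]φ ∈ w}`. -/
def GammaSet {Ags : Type} (a : Ags) (w : Set (Form Ags)) : Set (Form Ags) :=
  {ψ | ∃ φ, ψ = know a φ ∧ subj a φ ∈ w}

/-- `v ∈ α_k[w]`: the canonical relation of the composite operator `K_α□`. -/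
def alphak {Ags : Type} (a : Ags) (w v : Set (Form Ags)) : Prop :=
  ∀ φ : Form Ags, know a (box φ) ∈ w → φ ∈ v

/-- `Γ^w = ⋃_α Γ_α^w`. -/
def GammaAll {Ags : Type} (w : Set (Form Ags)) : Set (Form Ags) :=
  ⋃ a : Ags, GammaSet a w

-- The subjective value of a world of the canonical model:
-- `Value_S(u) = 1` iff `Γ^u ⊆ u`, else `0`.
open Classical in
noncomputable def valSC {Ags : Type} (w : Set (Form Ags)) : ℝ :=
  if GammaAll w ⊆ w then 1 else 0

/-- The canonical choice cell of `v` for agent `a` (within the MCSs). -/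
def cellC {Ags : Type} (a : Ags) (v : Set (Form Ags)) :
    Set (Set (Form Ags)) := {u | MCS u ∧ RactC a v u}

/-- The canonical choice cells at the `R_□`-class of `w`. -/
def cellsC {Ags : Type} (a : Ags) (w : Set (Form Ags)) :
    Set (Set (Set (Form Ags))) :=
  {C | ∃ v, MCS v ∧ RboxC w v ∧ C = cellC a v}

/-- Indistinguishability of classes (moments): `w ∼_α w'`. -/
def mEpsC {Ags : Type} (a : Ags) (w w' : Set (Form Ags)) : Prop :=
  ∃ v v', MCS v ∧ MCS v' ∧ RboxC w v ∧ RboxC w' v' ∧ RknowC a v v'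

/-- The epistemic cluster of a cell `L` at the class of `w'`. -/
def clusterC {Ags : Type} (a : Ags) (L : Set (Set (Form Ags)))
    (w' : Set (Form Ags)) : Set (Set (Form Ags)) :=
  {u | MCS u ∧ RboxC w' u ∧ ∃ o ∈ L, RknowC a o u}

/-- A state for agent `a` at the class of `w`: an intersection of the other
agents' choice cells, given by a selection `s`. -/
def stateC {Ags : Type} (a : Ags) (w : Set (Form Ags))
    (S : Set (Set (Form Ags))) : Prop :=
  ∃ s : Ags → Set (Form Ags), (∀ b, MCS (s b) ∧ RboxC w (s b)) ∧
    S = {u | MCS u ∧ ∀ b, b ≠ a → RactC b (s b) u}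

/-- Subjective dominance `L ⪯_s L'` on canonical cells at the class of `w`. -/
def domSC {Ags : Type} (a : Ags) (w : Set (Form Ags))
    (L L' : Set (Set (Form Ags))) : Prop :=
  ∀ w', MCS w' → mEpsC a w w' → ∀ S, stateC a w' S →
    ∀ x ∈ clusterC a L w' ∩ S, ∀ y ∈ clusterC a L' w' ∩ S, valSC x ≤ valSC y

/-- Strict subjective dominance. -/
def sdomSC {Ags : Type} (a : Ags) (w : Set (Form Ags))
    (L L' : Set (Set (Form Ags))) : Prop :=
  domSC a w L L' ∧ ¬ domSC a w L' L

namespace S18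
open Form
variable {Ags : Type}

inductive Der (Γ : Set (Form Ags)) : Form Ags → Prop
  | ax {φ} : φ ∈ Γ → Der Γ φ
  | pr {φ} : Prov φ → Der Γ φ
  | mp {φ ψ} : Der Γ (imp φ ψ) → Der Γ φ → Der Γ ψ

theorem Der.weak {Γ Δ : Set (Form Ags)} (h : Γ ⊆ Δ) {φ} (hd : Der Γ φ) : Der Δ φ := by
  induction hd with
  | ax h' => exact Der.ax (h h')
  | pr h' => exact Der.pr h'
  | mp _ _ ih1 ih2 => exact Der.mp ih1 ih2

theorem provId (φ : Form Ags) : Prov (imp φ φ) :=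
  Prov.mp (Prov.mp (Prov.pl2 φ (imp φ φ) φ) (Prov.pl1 φ (imp φ φ))) (Prov.pl1 φ φ)

theorem Der.dt {Γ : Set (Form Ags)} {φ ψ} (h : Der (insert φ Γ) ψ) : Der Γ (imp φ ψ) := by
  induction h with
  | @ax χ h' =>
    rcases Set.mem_insert_iff.1 h' with h'' | h''
    · subst h''; exact Der.pr (provId _)
    · exact Der.mp (Der.pr (Prov.pl1 _ _)) (Der.ax h'')
  | pr h' => exact Der.mp (Der.pr (Prov.pl1 _ _)) (Der.pr h')
  | mp _ _ ih1 ih2 => exact Der.mp (Der.mp (Der.pr (Prov.pl2 _ _ _)) ih1) ih2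

theorem prov_of_der_empty {φ : Form Ags} (h : Der (∅ : Set (Form Ags)) φ) : Prov φ := by
  induction h with
  | ax h' => exact absurd h' (Set.notMem_empty _)
  | pr h' => exact h'
  | mp _ _ ih1 ih2 => exact Prov.mp ih1 ih2

theorem der1 {Γ : Set (Form Ags)} (φ : Form Ags) : Der (insert φ Γ) φ :=
  Der.ax (Set.mem_insert _ _)

theorem der2 {Γ : Set (Form Ags)} (φ ψ : Form Ags) : Der (insert ψ (insert φ Γ)) φ :=
  Der.ax (Set.mem_insert_of_mem _ (Set.mem_insert _ _))

theorem der3 {Γ : Set (Form Ags)} (φ ψ χ : Form Ags) :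
    Der (insert χ (insert ψ (insert φ Γ))) φ :=
  Der.ax (Set.mem_insert_of_mem _ (Set.mem_insert_of_mem _ (Set.mem_insert _ _)))

theorem provDni (φ : Form Ags) : Prov (imp φ (neg (neg φ))) := by
  apply prov_of_der_empty
  exact Der.dt (Der.dt (Der.mp (der1 (neg φ)) (der2 φ (neg φ))))

theorem provDNE (φ : Form Ags) : Prov (imp (neg (neg φ)) φ) :=
  Prov.mp (Prov.pl3 φ (neg (neg φ))) (provDni (neg φ))

theorem impTrans {φ ψ χ : Form Ags} (h1 : Prov (imp φ ψ)) (h2 : Prov (imp ψ χ)) :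
    Prov (imp φ χ) := by
  apply prov_of_der_empty
  exact Der.dt (Der.mp (Der.pr h2) (Der.mp (Der.pr h1) (der1 φ)))

theorem provBotElim (φ : Form Ags) : Prov (imp bot φ) :=
  impTrans (Prov.pl1 bot (neg φ)) (provDNE φ)

theorem provContra {φ ψ : Form Ags} (h : Prov (imp φ ψ)) :
    Prov (imp (neg ψ) (neg φ)) := by
  apply prov_of_der_empty
  exact Der.dt (Der.dt (Der.mp (der2 (neg ψ) φ) (Der.mp (Der.pr h) (der1 φ))))

theorem provConjIntro (φ ψ : Form Ags) : Prov (imp φ (imp ψ (conj φ ψ))) := by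
  apply prov_of_der_empty
  refine Der.dt (Der.dt (Der.dt ?_))
  exact Der.mp (Der.mp (der1 (imp φ (neg ψ))) (der3 φ ψ (imp φ (neg ψ)))) (der2 ψ (imp φ (neg ψ)))

theorem provConjL (φ ψ : Form Ags) : Prov (imp (conj φ ψ) φ) := by
  apply prov_of_der_empty
  refine Der.dt ?_
  have h1 : Der (insert (neg φ) (insert (conj φ ψ) (∅ : Set (Form Ags)))) (imp φ (neg ψ)) := by
    refine Der.dt ?_
    exact Der.mp (Der.pr (provBotElim (neg ψ)))
      (Der.mp (der2 (neg φ) φ) (der1 φ))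
  have h2 : Der (insert (conj φ ψ) (∅ : Set (Form Ags))) (neg (neg φ)) :=
    Der.dt (Der.mp (der2 (conj φ ψ) (neg φ)) h1)
  exact Der.mp (Der.pr (provDNE φ)) h2

theorem provConjR (φ ψ : Form Ags) : Prov (imp (conj φ ψ) ψ) := by
  apply prov_of_der_empty
  refine Der.dt ?_
  have h1 : Der (insert (neg ψ) (insert (conj φ ψ) (∅ : Set (Form Ags)))) (imp φ (neg ψ)) :=
    Der.mp (Der.pr (Prov.pl1 (neg ψ) φ)) (der1 (neg ψ))
  have h2 : Der (insert (conj φ ψ) (∅ : Set (Form Ags))) (neg (neg ψ)) :=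
    Der.dt (Der.mp (der2 (conj φ ψ) (neg ψ)) h1)
  exact Der.mp (Der.pr (provDNE ψ)) h2

theorem provImpConj {σ φ ψ : Form Ags} (h1 : Prov (imp σ φ)) (h2 : Prov (imp σ ψ)) :
    Prov (imp σ (conj φ ψ)) := by
  apply prov_of_der_empty
  refine Der.dt ?_
  exact Der.mp (Der.mp (Der.pr (provConjIntro φ ψ)) (Der.mp (Der.pr h1) (der1 σ)))
    (Der.mp (Der.pr h2) (der1 σ))

theorem provNegBot : Prov (neg (bot : Form Ags)) := provId bot

theorem provConjlMem {l : List (Form Ags)} {φ : Form Ags} (h : φ ∈ l) :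
    Prov (imp (conjl l) φ) := by
  induction l with
  | nil => cases h
  | cons ψ l ih =>
    rcases List.mem_cons.1 h with rfl | h'
    · exact provConjL _ _
    · exact impTrans (provConjR _ _) (ih h')

theorem provImpConjl {σ : Form Ags} {l : List (Form Ags)}
    (h : ∀ φ ∈ l, Prov (imp σ φ)) : Prov (imp σ (conjl l)) := by
  induction l with
  | nil => exact Prov.mp (Prov.pl1 _ _) provNegBot
  | cons ψ l ih =>
    exact provImpConj (h ψ (List.mem_cons_self)) (ih fun φ hφ => h φ (List.mem_cons_of_mem _ hφ))

theorem der_conjl {Γ : Set (Form Ags)} {l : List (Form Ags)} (h : ∀ φ ∈ l, φ ∈ Γ) :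
    Der Γ (conjl l) := by
  induction l with
  | nil => exact Der.pr provNegBot
  | cons ψ l ih =>
    exact Der.mp (Der.mp (Der.pr (provConjIntro _ _)) (Der.ax (h ψ (List.mem_cons_self))))
      (ih fun φ hφ => h φ (List.mem_cons_of_mem _ hφ))

theorem der_finite {Γ : Set (Form Ags)} {φ : Form Ags} (h : Der Γ φ) :
    ∃ l : List (Form Ags), (∀ ψ ∈ l, ψ ∈ Γ) ∧ Prov (imp (conjl l) φ) := by
  induction h with
  | @ax φ h' =>
    exact ⟨[φ], by simp [h'], provConjlMem (List.mem_cons_self)⟩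
  | @pr φ h' => exact ⟨[], by simp, Prov.mp (Prov.pl1 _ _) h'⟩
  | @mp φ ψ _ _ ih1 ih2 =>
    obtain ⟨l1, hl1, hp1⟩ := ih1
    obtain ⟨l2, hl2, hp2⟩ := ih2
    refine ⟨l1 ++ l2, ?_, ?_⟩
    · intro χ hχ; rcases List.mem_append.1 hχ with h | h
      · exact hl1 χ h
      · exact hl2 χ h
    · have e1 : Prov (imp (conjl (l1 ++ l2)) (imp φ ψ)) :=
        impTrans (provImpConjl fun χ hχ => provConjlMem (List.mem_append_left _ hχ)) hp1
      have e2 : Prov (imp (conjl (l1 ++ l2)) φ) :=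
        impTrans (provImpConjl fun χ hχ => provConjlMem (List.mem_append_right _ hχ)) hp2
      apply prov_of_der_empty
      exact Der.dt (Der.mp (Der.mp (Der.pr e1) (der1 _)) (Der.mp (Der.pr e2) (der1 _)))

theorem consistent_iff_nder {Γ : Set (Form Ags)} : Consistent Γ ↔ ¬ Der Γ bot := by
  constructor
  · intro hc hd
    obtain ⟨l, hl, hp⟩ := der_finite hd
    exact hc ⟨l, hl, hp⟩
  · rintro hd ⟨l, hl, hp⟩
    exact hd (Der.mp (Der.pr hp) (der_conjl hl))

theorem chain_finite_bound {c : Set (Set (Form Ags))} (hc : IsChain (· ⊆ ·) c)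
    (hne : c.Nonempty) (l : List (Form Ags)) (hl : ∀ φ ∈ l, φ ∈ ⋃₀ c) :
    ∃ t ∈ c, ∀ φ ∈ l, φ ∈ t := by
  induction l with
  | nil => exact ⟨hne.choose, hne.choose_spec, by simp⟩
  | cons ψ l ih =>
    obtain ⟨t, htc, ht⟩ := ih fun φ hφ => hl φ (List.mem_cons_of_mem _ hφ)
    obtain ⟨s, hsc, hψ⟩ := hl ψ (List.mem_cons_self)
    rcases eq_or_ne s t with rfl | hst
    · refine ⟨s, hsc, ?_⟩
      intro φ hφ
      rcases List.mem_cons.1 hφ with rfl | h'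
      · exact hψ
      · exact ht φ h'
    rcases hc hsc htc hst with h | h
    · refine ⟨t, htc, ?_⟩
      intro φ hφ; rcases List.mem_cons.1 hφ with rfl | h'
      · exact h hψ
      · exact ht φ h'
    · refine ⟨s, hsc, ?_⟩
      intro φ hφ; rcases List.mem_cons.1 hφ with rfl | h'
      · exact hψ
      · exact h (ht φ h')

theorem lindenbaum {Γ : Set (Form Ags)} (h : Consistent Γ) :
    ∃ w : Set (Form Ags), Γ ⊆ w ∧ MCS w := by
  obtain ⟨m, hΓm, hm⟩ := zorn_subset_nonempty {Δ | Consistent Δ}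
    (fun c hcS hchain hcne => by
      refine ⟨⋃₀ c, ?_, fun s hs => Set.subset_sUnion_of_mem hs⟩
      rintro ⟨l, hl, hp⟩
      obtain ⟨t, htc, ht⟩ := chain_finite_bound hchain hcne l hl
      exact hcS htc ⟨l, ht, hp⟩) Γ h
  have hmc : Consistent m := hm.1
  refine ⟨m, hΓm, hmc, ?_⟩
  intro φ
  by_contra hcon
  push_neg at hcon
  have key : ∀ ψ : Form Ags, ψ ∉ m → Der m (neg ψ) := by
    intro ψ hψ
    have : ¬ Consistent (insert ψ m) := by
      intro hcons
      have := hm.2 hcons (Set.subset_insert _ _)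
      exact hψ (this (Set.mem_insert _ _))
    rw [consistent_iff_nder, not_not] at this
    exact Der.dt this
  have h1 := key φ hcon.1
  have h2 := key (neg φ) hcon.2
  exact (consistent_iff_nder.1 hmc) (Der.mp h2 h1)

theorem mcs_der {w : Set (Form Ags)} (hw : MCS w) {φ : Form Ags}
    (h : Der w φ) : φ ∈ w := by
  by_contra hφ
  rcases hw.2 φ with h' | h'
  · exact hφ h'
  · exact (consistent_iff_nder.1 hw.1) (Der.mp (Der.ax h') h)

theorem mcs_prov {w : Set (Form Ags)} (hw : MCS w) {φ : Form Ags} (h : Prov φ) : φ ∈ w :=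
  mcs_der hw (Der.pr h)

theorem mcs_mp {w : Set (Form Ags)} (hw : MCS w) {φ ψ : Form Ags}
    (h1 : imp φ ψ ∈ w) (h2 : φ ∈ w) : ψ ∈ w :=
  mcs_der hw (Der.mp (Der.ax h1) (Der.ax h2))

theorem mcs_not_both {w : Set (Form Ags)} (hw : MCS w) {φ : Form Ags}
    (h1 : φ ∈ w) (h2 : neg φ ∈ w) : False :=
  (consistent_iff_nder.1 hw.1) (Der.mp (Der.ax h2) (Der.ax h1))

theorem mcs_neg_iff {w : Set (Form Ags)} (hw : MCS w) {φ : Form Ags} :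
    neg φ ∈ w ↔ φ ∉ w := by
  constructor
  · intro h h'; exact mcs_not_both hw h' h
  · intro h; rcases hw.2 φ with h' | h'
    · exact absurd h' h
    · exact h'

theorem mcs_conjl {w : Set (Form Ags)} (hw : MCS w) {l : List (Form Ags)}
    (h : ∀ φ ∈ l, φ ∈ w) : conjl l ∈ w :=
  mcs_der hw (der_conjl h)

theorem boxMono {φ ψ : Form Ags} (h : Prov (imp φ ψ)) :
    Prov (imp (box φ) (box ψ)) :=
  Prov.mp (Prov.boxK φ ψ) (Prov.boxNec h)

theorem actMono (a : Ags) {φ ψ : Form Ags} (h : Prov (imp φ ψ)) :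
    Prov (imp (act a φ) (act a ψ)) :=
  Prov.mp (Prov.actK a φ ψ) (Prov.actNec a h)

theorem knowMono (a : Ags) {φ ψ : Form Ags} (h : Prov (imp φ ψ)) :
    Prov (imp (know a φ) (know a ψ)) :=
  Prov.mp (Prov.knowK a φ ψ) (Prov.knowNec a h)

theorem diaMono {φ ψ : Form Ags} (h : Prov (imp φ ψ)) :
    Prov (imp (dia φ) (dia ψ)) :=
  provContra (boxMono (provContra h))

theorem provDiaSelf (φ : Form Ags) : Prov (imp φ (dia φ)) := by
  apply prov_of_der_empty
  refine Der.dt ?_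
  have h : Der (insert (box (neg φ)) (insert φ (∅ : Set (Form Ags)))) bot :=
    Der.mp (Der.mp (Der.pr (Prov.boxT (neg φ))) (der1 _)) (der2 φ (box (neg φ)))
  exact Der.dt h

/-- In an MCS: `box χ ∈ w → dia σ ∈ w → dia (conj χ σ) ∈ w`. -/
theorem dia_conj_of_box {w : Set (Form Ags)} (hw : MCS w) {χ σ : Form Ags}
    (h1 : box χ ∈ w) (h2 : dia σ ∈ w) : dia (conj χ σ) ∈ w := by
  have e0 : Prov (imp χ (imp (neg (conj χ σ)) (neg σ))) := by
    apply prov_of_der_empty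
    refine Der.dt (Der.dt (Der.dt ?_))
    exact Der.mp (der2 (neg (conj χ σ)) σ)
      (Der.mp (Der.mp (Der.pr (provConjIntro χ σ)) (der3 χ (neg (conj χ σ)) σ)) (der1 σ))
  have e1 : Prov (imp (box χ) (imp (box (neg (conj χ σ))) (box (neg σ)))) :=
    impTrans (boxMono e0) (Prov.boxK _ _)
  by_contra hcon
  have h3 : neg (dia (conj χ σ)) ∈ w := (mcs_neg_iff hw).2 hcon
  have h4 : box (neg (conj χ σ)) ∈ w :=
    mcs_mp hw (mcs_prov hw (provDNE _)) h3
  have h5 : box (neg σ) ∈ w := mcs_mp hw (mcs_mp hw (mcs_prov hw e1) h1) h4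
  exact mcs_not_both hw h5 h2


theorem rbox_refl {w : Set (Form Ags)} (hw : MCS w) : RboxC w w :=
  fun φ h => mcs_mp hw (mcs_prov hw (Prov.boxT φ)) h

theorem ract_refl (a : Ags) {w : Set (Form Ags)} (hw : MCS w) : RactC a w w :=
  fun φ h => mcs_mp hw (mcs_prov hw (Prov.actT a φ)) h

theorem rknow_refl (a : Ags) {w : Set (Form Ags)} (hw : MCS w) : RknowC a w w :=
  fun φ h => mcs_mp hw (mcs_prov hw (Prov.knowT a φ)) h

theorem rbox_trans {w v u : Set (Form Ags)} (hw : MCS w)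
    (h1 : RboxC w v) (h2 : RboxC v u) : RboxC w u :=
  fun φ h => h2 φ (h1 (box φ) (mcs_mp hw (mcs_prov hw (Prov.box4 φ)) h))

theorem rknow_trans (a : Ags) {w v u : Set (Form Ags)} (hw : MCS w)
    (h1 : RknowC a w v) (h2 : RknowC a v u) : RknowC a w u :=
  fun φ h => h2 φ (h1 (know a φ) (mcs_mp hw (mcs_prov hw (Prov.know4 a φ)) h))

theorem rbox_symm {w v : Set (Form Ags)} (hw : MCS w) (hv : MCS v)
    (h : RboxC w v) : RboxC v w := by
  intro φ hφ
  by_contra hcon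
  have h1 : neg φ ∈ w := (mcs_neg_iff hw).2 hcon
  have h2 : dia (neg φ) ∈ w := mcs_mp hw (mcs_prov hw (provDiaSelf (neg φ))) h1
  have h3 : box (dia (neg φ)) ∈ w := mcs_mp hw (mcs_prov hw (Prov.box5 (neg φ))) h2
  have h4 : dia (neg φ) ∈ v := h _ h3
  have h5 : box (neg (neg φ)) ∈ v := mcs_mp hv (mcs_prov hv (boxMono (provDni φ))) hφ
  exact mcs_not_both hv h5 h4

theorem ract_back (a : Ags) {w v : Set (Form Ags)} (hw : MCS w) (hv : MCS v)
    (h : RactC a w v) {φ : Form Ags} (hφ : act a φ ∈ v) : act a φ ∈ w := by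
  by_contra hcon
  have h1 : neg (act a φ) ∈ w := (mcs_neg_iff hw).2 hcon
  have h2 : act a (neg (act a φ)) ∈ w := mcs_mp hw (mcs_prov hw (Prov.act5 a φ)) h1
  exact mcs_not_both hv hφ (h _ h2)

theorem ract_symm (a : Ags) {w v : Set (Form Ags)} (hw : MCS w) (hv : MCS v)
    (h : RactC a w v) : RactC a v w :=
  fun φ hφ => mcs_mp hw (mcs_prov hw (Prov.actT a φ)) (ract_back a hw hv h hφ)

theorem rknow_back (a : Ags) {w v : Set (Form Ags)} (hw : MCS w) (hv : MCS v)
    (h : RknowC a w v) {φ : Form Ags} (hφ : know a φ ∈ v) : know a φ ∈ w := by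
  by_contra hcon
  have h1 : neg (know a φ) ∈ w := (mcs_neg_iff hw).2 hcon
  have h2 : know a (neg (know a φ)) ∈ w := mcs_mp hw (mcs_prov hw (Prov.know5 a φ)) h1
  exact mcs_not_both hv hφ (h _ h2)

theorem rknow_symm (a : Ags) {w v : Set (Form Ags)} (hw : MCS w) (hv : MCS v)
    (h : RknowC a w v) : RknowC a v w :=
  fun φ hφ => mcs_mp hw (mcs_prov hw (Prov.knowT a φ)) (rknow_back a hw hv h hφ)

theorem ract_to_rknow (a : Ags) {w v : Set (Form Ags)} (hw : MCS w)
    (h : RactC a w v) : RknowC a w v :=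
  fun φ hφ => h φ (mcs_mp hw (mcs_prov hw (Prov.oacAx a φ)) hφ)

theorem ract_to_rbox (a : Ags) {w v : Set (Form Ags)} (hw : MCS w)
    (h : RactC a w v) : RboxC w v := by
  intro φ hφ
  have h1 : conj (act a φ) (obj a φ) ∈ w := mcs_mp hw (mcs_prov hw (Prov.a2 a φ)) hφ
  exact h φ (mcs_mp hw (mcs_prov hw (provConjL _ _)) h1)

theorem dia_mem_of_rbox {w v : Set (Form Ags)} (hw : MCS w) (hv : MCS v)
    (h : RboxC w v) {φ : Form Ags} (hφ : φ ∈ v) : dia φ ∈ w := by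
  by_contra hcon
  have h1 : neg (dia φ) ∈ w := (mcs_neg_iff hw).2 hcon
  have h2 : box (neg φ) ∈ w := mcs_mp hw (mcs_prov hw (provDNE _)) h1
  exact mcs_not_both hv hφ (h _ h2)

-- transfer lemmas for subj / know
theorem subj_box_stable (a : Ags) (φ : Form Ags) :
    Prov (imp (subj a φ) (box (subj a φ))) :=
  impTrans (Prov.clAx a φ) (Prov.knowT a (box (subj a φ)))

theorem subj_mem_of_rbox {a : Ags} {w v : Set (Form Ags)} (hw : MCS w)
    (h : RboxC w v) {φ : Form Ags} (hφ : subj a φ ∈ w) : subj a φ ∈ v :=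
  h _ (mcs_mp hw (mcs_prov hw (subj_box_stable a φ)) hφ)

theorem subj_mem_of_rknow {a : Ags} {w v : Set (Form Ags)} (hw : MCS w) (hv : MCS v)
    (h : RknowC a w v) {φ : Form Ags} (hφ : subj a φ ∈ w) : subj a φ ∈ v := by
  have h1 : know a (box (subj a φ)) ∈ w := mcs_mp hw (mcs_prov hw (Prov.clAx a φ)) hφ
  have h2 : box (subj a φ) ∈ v := h _ h1
  exact mcs_mp hv (mcs_prov hv (Prov.boxT _)) h2

theorem know_mem_of_rknow {a : Ags} {w v : Set (Form Ags)} (hw : MCS w)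
    (h : RknowC a w v) {φ : Form Ags} (hφ : know a φ ∈ w) : know a φ ∈ v :=
  h _ (mcs_mp hw (mcs_prov hw (Prov.know4 a φ)) hφ)

/-- Transfer of `Γ_a ⊆ ·` along the epistemic relation. -/
theorem gamma_transfer {a : Ags} {u u' : Set (Form Ags)} (hu : MCS u) (hu' : MCS u')
    (h : RknowC a u u') (hg : ∀ φ : Form Ags, subj a φ ∈ u → know a φ ∈ u) :
    ∀ φ : Form Ags, subj a φ ∈ u' → know a φ ∈ u' := by
  intro φ hφ
  have h1 : subj a φ ∈ u := subj_mem_of_rknow hu' hu (rknow_symm a hu hu' h) hφ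
  exact know_mem_of_rknow hu h (hg φ h1)

theorem provBoxConj (φ ψ : Form Ags) :
    Prov (imp (box φ) (imp (box ψ) (box (conj φ ψ)))) :=
  impTrans (boxMono (provConjIntro φ ψ)) (Prov.boxK ψ (conj φ ψ))

theorem provActConj (a : Ags) (φ ψ : Form Ags) :
    Prov (imp (act a φ) (imp (act a ψ) (act a (conj φ ψ)))) :=
  impTrans (actMono a (provConjIntro φ ψ)) (Prov.actK a ψ (conj φ ψ))

theorem provKnowConj (a : Ags) (φ ψ : Form Ags) :
    Prov (imp (know a φ) (imp (know a ψ) (know a (conj φ ψ)))) :=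
  impTrans (knowMono a (provConjIntro φ ψ)) (Prov.knowK a ψ (conj φ ψ))

theorem provSubjConj (a : Ags) (φ ψ : Form Ags) :
    Prov (imp (subj a φ) (imp (subj a ψ) (subj a (conj φ ψ)))) :=
  impTrans (Prov.mp (Prov.a5 a φ (imp ψ (conj φ ψ))) (Prov.subjNec a (provConjIntro φ ψ)))
    (Prov.a5 a ψ (conj φ ψ))

theorem conjl_replace {μ' μ : Form Ags} (h : Prov (imp μ' μ)) (s t : List (Form Ags)) :
    Prov (imp (conjl (s ++ μ' :: t)) (conjl (s ++ μ :: t))) := by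
  induction s with
  | nil => exact provImpConj (impTrans (provConjL _ _) h) (provConjR _ _)
  | cons χ s ih => exact provImpConj (provConjL _ _) (impTrans (provConjR _ _) ih)

/-- Core consistency lemma via independence of agents. -/
theorem ia_consistency {w : Set (Form Ags)} (hw : MCS w) {χ : Form Ags} (hχ : box χ ∈ w)
    {L : List (Ags × Form Ags)} (hpw : L.Pairwise fun p q => p.1 ≠ q.1)
    (hdia : ∀ p ∈ L, dia (act p.1 p.2) ∈ w) :
    ¬ Prov (imp (conj χ (conjl (L.map fun p => act p.1 p.2))) bot) := by
  intro hcontra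
  have h1 : conjl (L.map fun p => dia (act p.1 p.2)) ∈ w := by
    apply mcs_conjl hw
    intro ψ hψ
    obtain ⟨p, hp, rfl⟩ := List.mem_map.1 hψ
    exact hdia p hp
  have h2 : dia (conjl (L.map fun p => act p.1 p.2)) ∈ w :=
    mcs_mp hw (mcs_prov hw (Prov.ia L hpw)) h1
  have h3 : dia (conj χ (conjl (L.map fun p => act p.1 p.2))) ∈ w :=
    dia_conj_of_box hw hχ h2
  have h4 : box (neg (conj χ (conjl (L.map fun p => act p.1 p.2)))) ∈ w :=
    mcs_prov hw (Prov.boxNec hcontra)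
  exact mcs_not_both hw h4 h3

theorem pairwise_replace {p p' : Ags × Form Ags} (hfst : p'.1 = p.1)
    (s t : List (Ags × Form Ags))
    (h : (s ++ p :: t).Pairwise fun q r => q.1 ≠ r.1) :
    (s ++ p' :: t).Pairwise fun q r => q.1 ≠ r.1 := by
  rw [List.pairwise_append] at h ⊢
  obtain ⟨h1, h2, h3⟩ := h
  rw [List.pairwise_cons] at h2 ⊢
  refine ⟨h1, ⟨fun q hq => hfst ▸ h2.1 q hq, h2.2⟩, ?_⟩
  intro q hq r hr
  rcases List.mem_cons.1 hr with rfl | hr'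
  · exact hfst ▸ h3 q hq p (List.mem_cons_self)
  · exact h3 q hq r (List.mem_cons_of_mem _ hr')

/-- Grouping lemma for the existence of a value-1 world. -/
theorem groupE {w : Set (Form Ags)} (hw : MCS w) (l : List (Form Ags))
    (hl : ∀ ψ ∈ l, box ψ ∈ w ∨ ∃ (b : Ags) (φ : Form Ags), ψ = know b φ ∧ subj b φ ∈ w) :
    ∃ (χ : Form Ags) (L : List (Ags × Form Ags)),
      box χ ∈ w ∧ (L.Pairwise fun p q => p.1 ≠ q.1) ∧
      (∀ p ∈ L, ∃ ρ, p.2 = know p.1 ρ ∧ subj p.1 ρ ∈ w) ∧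
      Prov (imp (conj χ (conjl (L.map fun p => act p.1 p.2))) (conjl l)) := by
  induction l with
  | nil =>
    refine ⟨neg bot, [], mcs_prov hw (Prov.boxNec provNegBot), List.Pairwise.nil, by simp, ?_⟩
    exact Prov.mp (Prov.pl1 _ _) provNegBot
  | cons ψ l ih =>
    obtain ⟨χ, L, hχ, hpw, hinv, himp⟩ := ih fun φ hφ => hl φ (List.mem_cons_of_mem _ hφ)
    rcases hl ψ (List.mem_cons_self) with hbox | ⟨b, φ, rfl, hsubj⟩
    · -- box case : strengthen χ
      refine ⟨conj ψ χ, L, ?_, hpw, hinv, ?_⟩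
      · exact mcs_mp hw (mcs_mp hw (mcs_prov hw (provBoxConj ψ χ)) hbox) hχ
      · refine provImpConj (impTrans (provConjL _ _) (provConjL _ _)) ?_
        exact impTrans (provImpConj (impTrans (provConjL _ _) (provConjR _ _))
          (provConjR _ _)) himp
    · by_cases hb : ∃ p ∈ L, p.1 = b
      · obtain ⟨p, hpL, hp1⟩ := hb
        obtain ⟨ρ, hρeq, hρw⟩ := hinv p hpL
        obtain ⟨s, t, rfl⟩ := List.append_of_mem hpL
        obtain ⟨b', μ⟩ := p
        simp only at hp1
        subst hp1
        simp only at hρeq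
        subst hρeq
        refine ⟨χ, s ++ (b', know b' (conj φ ρ)) :: t, hχ, ?_, ?_, ?_⟩
        · exact pairwise_replace (p := (b', know b' ρ)) (p' := (b', know b' (conj φ ρ))) rfl s t hpw
        · intro q hq
          rcases List.mem_append.1 hq with hq' | hq'
          · exact hinv q (List.mem_append_left _ hq')
          rcases List.mem_cons.1 hq' with rfl | hq''
          · exact ⟨conj φ ρ, rfl,
              mcs_mp hw (mcs_mp hw (mcs_prov hw (provSubjConj b' φ ρ)) hsubj) hρw⟩
          · exact hinv q (List.mem_append_right _ (List.mem_cons_of_mem _ hq''))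
        · have hrepl : Prov (imp (act b' (know b' (conj φ ρ))) (act b' (know b' ρ))) :=
            actMono b' (knowMono b' (provConjR φ ρ))
          have hi : Prov (imp
              (conjl ((s ++ (b', know b' (conj φ ρ)) :: t).map fun p => act p.1 p.2))
              (conjl ((s ++ (b', know b' ρ) :: t).map fun p => act p.1 p.2))) := by
            simpa using conjl_replace hrepl (s.map fun p => act p.1 p.2)
              (t.map fun p => act p.1 p.2)
          have hmem : act b' (know b' (conj φ ρ)) ∈
              ((s ++ (b', know b' (conj φ ρ)) :: t).map fun p => act p.1 p.2) := by
            simp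
          have hii : Prov (imp
              (conjl ((s ++ (b', know b' (conj φ ρ)) :: t).map fun p => act p.1 p.2))
              (know b' φ)) :=
            impTrans (provConjlMem hmem)
              (impTrans (Prov.actT b' _) (knowMono b' (provConjL φ ρ)))
          refine provImpConj (impTrans (provConjR _ _) hii) ?_
          exact impTrans (provImpConj (provConjL _ _) (impTrans (provConjR _ _) hi)) himp
      · push_neg at hb
        refine ⟨χ, (b, know b φ) :: L, hχ, ?_, ?_, ?_⟩
        · exact List.Pairwise.cons (fun q hq => (hb q hq).symm) hpw
        · intro q hq
          rcases List.mem_cons.1 hq with rfl | hq'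
          · exact ⟨φ, rfl, hsubj⟩
          · exact hinv q hq'
        · have hk : Prov (imp (act b (know b φ)) (know b φ)) := Prov.actT b _
          refine provImpConj
            (impTrans (provConjR _ _) (impTrans (provConjL _ _) hk)) ?_
          exact impTrans (provImpConj (provConjL _ _)
            (impTrans (provConjR _ _) (provConjR _ _))) himp

/-- Existence of a value-1 world at the `R_□`-class of `w`. -/
theorem exists_value_one {w : Set (Form Ags)} (hw : MCS w) :
    ∃ u : Set (Form Ags), MCS u ∧ RboxC w u ∧
      ∀ (b : Ags) (φ : Form Ags), subj b φ ∈ u → know b φ ∈ u := by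
  have hcons : Consistent
      {ψ : Form Ags | box ψ ∈ w ∨ ∃ (b : Ags) (φ : Form Ags), ψ = know b φ ∧ subj b φ ∈ w} := by
    rintro ⟨l, hl, hp⟩
    obtain ⟨χ, L, hχ, hpw, hinv, himp⟩ := groupE hw l hl
    refine ia_consistency hw hχ hpw ?_ (impTrans himp hp)
    intro p hp'
    obtain ⟨ρ, hρ, hρw⟩ := hinv p hp'
    rw [hρ]
    have h1 : dia (know p.1 ρ) ∈ w := mcs_mp hw (mcs_prov hw (Prov.sOic p.1 ρ)) hρw
    exact mcs_mp hw (mcs_prov hw (diaMono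
      (impTrans (Prov.know4 p.1 ρ) (Prov.oacAx p.1 (know p.1 ρ))))) h1
  obtain ⟨u, hsub, hu⟩ := lindenbaum hcons
  have hwu : RboxC w u := fun φ h => hsub (Or.inl h)
  refine ⟨u, hu, hwu, ?_⟩
  intro b φ hφ
  have h1 : subj b φ ∈ w := subj_mem_of_rbox hu (rbox_symm hw hu hwu) hφ
  exact hsub (Or.inr ⟨b, φ, rfl, h1⟩)

/-- Grouping lemma for the dominated witness world. -/
theorem groupY (a : Ags) {w u : Set (Form Ags)} (hw : MCS w) (hu : MCS u)
    (l : List (Form Ags))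
    (hl : ∀ ψ ∈ l, box ψ ∈ w ∨ know a ψ ∈ w ∨ ∃ b : Ags, b ≠ a ∧ act b ψ ∈ u) :
    ∃ (χ : Form Ags) (L : List (Ags × Form Ags)),
      box χ ∈ w ∧ (L.Pairwise fun p q => p.1 ≠ q.1) ∧
      (∀ p ∈ L, (p.1 = a ∧ ∃ κ, p.2 = know a κ ∧ know a κ ∈ w) ∨
        (p.1 ≠ a ∧ act p.1 p.2 ∈ u)) ∧
      Prov (imp (conj χ (conjl (L.map fun p => act p.1 p.2))) (conjl l)) := by
  induction l with
  | nil =>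
    refine ⟨neg bot, [], mcs_prov hw (Prov.boxNec provNegBot), List.Pairwise.nil, by simp, ?_⟩
    exact Prov.mp (Prov.pl1 _ _) provNegBot
  | cons ψ l ih =>
    obtain ⟨χ, L, hχ, hpw, hinv, himp⟩ := ih fun φ hφ => hl φ (List.mem_cons_of_mem _ hφ)
    rcases hl ψ (List.mem_cons_self) with hbox | hknow | ⟨b, hb, hact⟩
    · refine ⟨conj ψ χ, L, ?_, hpw, hinv, ?_⟩
      · exact mcs_mp hw (mcs_mp hw (mcs_prov hw (provBoxConj ψ χ)) hbox) hχ
      · refine provImpConj (impTrans (provConjL _ _) (provConjL _ _)) ?_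
        exact impTrans (provImpConj (impTrans (provConjL _ _) (provConjR _ _))
          (provConjR _ _)) himp
    · -- know a ψ ∈ w
      by_cases ha : ∃ p ∈ L, p.1 = a
      · obtain ⟨p, hpL, hp1⟩ := ha
        rcases hinv p hpL with ⟨_, κ, hκ, hκw⟩ | ⟨hpna, _⟩
        swap
        · exact absurd hp1 hpna
        obtain ⟨s, t, rfl⟩ := List.append_of_mem hpL
        obtain ⟨b', μ⟩ := p
        simp only at hκ hp1
        subst hκ
        refine ⟨χ, s ++ (b', know a (conj ψ κ)) :: t, hχ, ?_, ?_, ?_⟩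
        · exact pairwise_replace (p := (b', know a κ))
            (p' := (b', know a (conj ψ κ))) rfl s t hpw
        · intro q hq
          rcases List.mem_append.1 hq with hq' | hq'
          · exact hinv q (List.mem_append_left _ hq')
          rcases List.mem_cons.1 hq' with rfl | hq''
          · refine Or.inl ⟨hp1, conj ψ κ, rfl, ?_⟩
            exact mcs_mp hw (mcs_mp hw (mcs_prov hw (provKnowConj a ψ κ)) hknow) hκw
          · exact hinv q (List.mem_append_right _ (List.mem_cons_of_mem _ hq''))
        · have hrepl : Prov (imp (act b' (know a (conj ψ κ))) (act b' (know a κ))) :=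
            actMono b' (knowMono a (provConjR ψ κ))
          have hi : Prov (imp
              (conjl ((s ++ (b', know a (conj ψ κ)) :: t).map fun p => act p.1 p.2))
              (conjl ((s ++ (b', know a κ) :: t).map fun p => act p.1 p.2))) := by
            simpa using conjl_replace hrepl (s.map fun p => act p.1 p.2)
              (t.map fun p => act p.1 p.2)
          have hmem : act b' (know a (conj ψ κ)) ∈
              ((s ++ (b', know a (conj ψ κ)) :: t).map fun p => act p.1 p.2) := by
            simp
          have hii : Prov (imp
              (conjl ((s ++ (b', know a (conj ψ κ)) :: t).map fun p => act p.1 p.2)) ψ) :=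
            impTrans (provConjlMem hmem) (impTrans (Prov.actT b' _)
              (impTrans (Prov.knowT a _) (provConjL ψ κ)))
          refine provImpConj (impTrans (provConjR _ _) hii) ?_
          exact impTrans (provImpConj (provConjL _ _) (impTrans (provConjR _ _) hi)) himp
      · push_neg at ha
        refine ⟨χ, (a, know a ψ) :: L, hχ, ?_, ?_, ?_⟩
        · exact List.Pairwise.cons (fun q hq => (ha q hq).symm) hpw
        · intro q hq
          rcases List.mem_cons.1 hq with rfl | hq'
          · exact Or.inl ⟨rfl, ψ, rfl, hknow⟩
          · exact hinv q hq'
        · refine provImpConj (impTrans (provConjR _ _) (impTrans (provConjL _ _)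
            (impTrans (Prov.actT a _) (Prov.knowT a ψ)))) ?_
          exact impTrans (provImpConj (provConjL _ _)
            (impTrans (provConjR _ _) (provConjR _ _))) himp
    · -- act b ψ ∈ u, b ≠ a
      by_cases hbL : ∃ p ∈ L, p.1 = b
      · obtain ⟨p, hpL, hp1⟩ := hbL
        rcases hinv p hpL with ⟨hpa, _⟩ | ⟨hpna, hactμ⟩
        · exact absurd (hp1 ▸ hpa) hb
        obtain ⟨s, t, rfl⟩ := List.append_of_mem hpL
        obtain ⟨b', μ⟩ := p
        simp only at hp1 hpna hactμ
        have hactψ : act b' ψ ∈ u := hp1.symm ▸ hact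
        refine ⟨χ, s ++ (b', conj ψ μ) :: t, hχ, ?_, ?_, ?_⟩
        · exact pairwise_replace (p := (b', μ)) (p' := (b', conj ψ μ)) rfl s t hpw
        · intro q hq
          rcases List.mem_append.1 hq with hq' | hq'
          · exact hinv q (List.mem_append_left _ hq')
          rcases List.mem_cons.1 hq' with rfl | hq''
          · refine Or.inr ⟨hpna, ?_⟩
            exact mcs_mp hu (mcs_mp hu (mcs_prov hu (provActConj b' ψ μ)) hactψ) hactμ
          · exact hinv q (List.mem_append_right _ (List.mem_cons_of_mem _ hq''))
        · have hrepl : Prov (imp (act b' (conj ψ μ)) (act b' μ)) :=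
            actMono b' (provConjR ψ μ)
          have hi : Prov (imp
              (conjl ((s ++ (b', conj ψ μ) :: t).map fun p => act p.1 p.2))
              (conjl ((s ++ (b', μ) :: t).map fun p => act p.1 p.2))) := by
            simpa using conjl_replace hrepl (s.map fun p => act p.1 p.2)
              (t.map fun p => act p.1 p.2)
          have hmem : act b' (conj ψ μ) ∈
              ((s ++ (b', conj ψ μ) :: t).map fun p => act p.1 p.2) := by
            simp
          have hii : Prov (imp
              (conjl ((s ++ (b', conj ψ μ) :: t).map fun p => act p.1 p.2)) ψ) :=
            impTrans (provConjlMem hmem) (impTrans (Prov.actT b' _) (provConjL ψ μ))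
          refine provImpConj (impTrans (provConjR _ _) hii) ?_
          exact impTrans (provImpConj (provConjL _ _) (impTrans (provConjR _ _) hi)) himp
      · push_neg at hbL
        refine ⟨χ, (b, ψ) :: L, hχ, ?_, ?_, ?_⟩
        · exact List.Pairwise.cons (fun q hq => (hbL q hq).symm) hpw
        · intro q hq
          rcases List.mem_cons.1 hq with rfl | hq'
          · exact Or.inr ⟨hb, hact⟩
          · exact hinv q hq'
        · refine provImpConj (impTrans (provConjR _ _) (impTrans (provConjL _ _)
            (Prov.actT b ψ))) ?_
          exact impTrans (provImpConj (provConjL _ _)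
            (impTrans (provConjR _ _) (provConjR _ _))) himp

/-- Existence of the dominated witness world. -/
theorem exists_y (a : Ags) {w u : Set (Form Ags)} (hw : MCS w) (hu : MCS u)
    (hr : RboxC w u) :
    ∃ y : Set (Form Ags), MCS y ∧ RboxC w y ∧ RknowC a w y ∧
      ∀ b : Ags, b ≠ a → RactC b u y := by
  have hcons : Consistent
      {ψ : Form Ags | box ψ ∈ w ∨ know a ψ ∈ w ∨ ∃ b : Ags, b ≠ a ∧ act b ψ ∈ u} := by
    rintro ⟨l, hl, hp⟩
    obtain ⟨χ, L, hχ, hpw, hinv, himp⟩ := groupY a hw hu l hl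
    refine ia_consistency hw hχ hpw ?_ (impTrans himp hp)
    intro p hp'
    rcases hinv p hp' with ⟨hpa, κ, hκ, hκw⟩ | ⟨_, hactu⟩
    · rw [hpa, hκ]
      have h1 : act a (know a κ) ∈ w :=
        mcs_mp hw (mcs_prov hw (impTrans (Prov.know4 a κ) (Prov.oacAx a (know a κ)))) hκw
      exact mcs_mp hw (mcs_prov hw (provDiaSelf _)) h1
    · exact dia_mem_of_rbox hw hu hr hactu
  obtain ⟨y, hsub, hy⟩ := lindenbaum hcons
  refine ⟨y, hy, fun φ h => hsub (Or.inl h), fun φ h => hsub (Or.inr (Or.inl h)), ?_⟩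
  intro b hb φ h
  exact hsub (Or.inr (Or.inr ⟨b, hb, h⟩))

variable {Ags : Type}

theorem gammaSet_iff {a : Ags} {w : Set (Form Ags)} :
    GammaSet a w ⊆ w ↔ ∀ φ : Form Ags, subj a φ ∈ w → know a φ ∈ w := by
  constructor
  · intro h φ hφ
    exact h ⟨φ, rfl, hφ⟩
  · rintro h ψ ⟨φ, rfl, hφ⟩
    exact h φ hφ

theorem gammaAll_iff {w : Set (Form Ags)} :
    GammaAll w ⊆ w ↔ ∀ (b : Ags) (φ : Form Ags), subj b φ ∈ w → know b φ ∈ w := by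
  constructor
  · intro h b φ hφ
    exact h (Set.mem_iUnion.2 ⟨b, φ, rfl, hφ⟩)
  · intro h ψ hψ
    obtain ⟨b, φ, rfl, hφ⟩ := Set.mem_iUnion.1 hψ
    exact h b φ hφ

theorem val_cases {x y : Set (Form Ags)} (h : valSC y < valSC x) :
    GammaAll x ⊆ x ∧ ¬ GammaAll y ⊆ y := by
  by_cases h1 : GammaAll x ⊆ x
  · by_cases h2 : GammaAll y ⊆ y
    · simp only [valSC, if_pos h1, if_pos h2] at h
      norm_num at h
    · exact ⟨h1, h2⟩
  · simp only [valSC, if_neg h1] at h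
    by_cases h2 : GammaAll y ⊆ y
    · simp only [valSC, if_pos h2] at h
      norm_num at h
    · simp only [valSC, if_neg h2] at h
      norm_num at h

theorem val_le_of {x y : Set (Form Ags)} (h : GammaAll x ⊆ x → GammaAll y ⊆ y) :
    valSC x ≤ valSC y := by
  by_cases h1 : GammaAll x ⊆ x
  · simp [valSC, h1, h h1]
  · simp only [valSC, if_neg h1]
    by_cases h2 : GammaAll y ⊆ y <;> simp [h2]

/-- `Γ_b ⊆ ·` transfers between two members of the same `b`-cell. -/
theorem gammaS_transfer_state {b : Ags} {sb x y : Set (Form Ags)} (hsb : MCS sb)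
    (hx : MCS x) (hy : MCS y) (h1 : RactC b sb x) (h2 : RactC b sb y)
    (hg : ∀ φ : Form Ags, subj b φ ∈ x → know b φ ∈ x) :
    ∀ φ : Form Ags, subj b φ ∈ y → know b φ ∈ y := by
  have k1 : RknowC b sb x := ract_to_rknow b hsb h1
  have k2 : RknowC b sb y := ract_to_rknow b hsb h2
  have kxy : RknowC b x y := rknow_trans b hx (rknow_symm b hsb hx k1) k2
  exact gamma_transfer hx hy kxy hg


end S18

open S18 in
/-- `Γ_α^w ⊆ w` iff the choice cell of `w` is subjectively optimal
(undominated in `≺_s` among the cells at the class of `w`). -/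
theorem statement18 {Ags : Type} (a : Ags) (w : Set (Form Ags)) (hw : MCS w) :
    GammaSet a w ⊆ w ↔ ¬ ∃ L' ∈ cellsC a w, sdomSC a w (cellC a w) L' := by
  constructor
  · rintro h ⟨L', ⟨v, hv, hwv, rfl⟩, _, hndom⟩
    rw [domSC] at hndom
    push_neg at hndom
    obtain ⟨w', hw', hm, S, hS, x, hx, y, hy, hlt⟩ := hndom
    obtain ⟨s, hs, rfl⟩ := hS
    obtain ⟨hxall, hyn⟩ := val_cases hlt
    rw [gammaAll_iff] at hxall hyn
    push_neg at hyn
    obtain ⟨b, φ, hsubj, hknot⟩ := hyn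
    by_cases hba : b = a
    · subst hba
      obtain ⟨hyM, hybox, o, ⟨hoM, hoact⟩, hok⟩ := hy.1
      have hk : RknowC b w y := rknow_trans b hw (ract_to_rknow b hw hoact) hok
      have hg := gamma_transfer hw hyM hk (gammaSet_iff.1 h)
      exact hknot (hg φ hsubj)
    · have hxS := hx.2
      have hyS := hy.2
      have hg := gammaS_transfer_state (hs b).1 hxS.1 hyS.1
        (hxS.2 b hba) (hyS.2 b hba) (hxall b)
      exact hknot (hg φ hsubj)
  · intro hRHS
    by_contra hns
    obtain ⟨ψ, hψmem, hψnot⟩ := Set.not_subset.1 hns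
    obtain ⟨φ, rfl, hsubj⟩ := hψmem
    obtain ⟨u, hu, hwu, hugamma⟩ := exists_value_one hw
    obtain ⟨y, hy, hwy, hwky, hyact⟩ := exists_y a hw hu hwu
    apply hRHS
    refine ⟨cellC a u, ⟨u, hu, hwu, rfl⟩, ?_, ?_⟩
    · intro w' hw' hm S hS x hx y' hy'
      obtain ⟨s, hs, rfl⟩ := hS
      apply val_le_of
      intro hxall
      rw [gammaAll_iff] at hxall ⊢
      intro b φ'
      by_cases hba : b = a
      · subst hba
        obtain ⟨hyM, hybox, o, ⟨hoM, hoact⟩, hok⟩ := hy'.1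
        have hk : RknowC b u y' := rknow_trans b hu (ract_to_rknow b hu hoact) hok
        exact gamma_transfer hu hyM hk (hugamma b) φ'
      · exact gammaS_transfer_state (hs b).1 hx.2.1 hy'.2.1
          (hx.2.2 b hba) (hy'.2.2 b hba) (hxall b) φ'
    · intro hdomrev
      have hunited := hdomrev w hw
        ⟨w, w, hw, hw, rbox_refl hw, rbox_refl hw, rknow_refl a hw⟩
        {v | MCS v ∧ ∀ b, b ≠ a → RactC b u v}
        ⟨fun _ => u, fun _ => ⟨hu, hwu⟩, rfl⟩
        u ⟨⟨hu, hwu, u, ⟨hu, ract_refl a hu⟩, rknow_refl a hu⟩,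
           hu, fun b _ => ract_refl b hu⟩
        y ⟨⟨hy, hwy, w, ⟨hw, ract_refl a hw⟩, hwky⟩, hy, hyact⟩
      have hyval : ¬ GammaAll y ⊆ y := by
        rw [gammaAll_iff]
        push_neg
        refine ⟨a, φ, subj_mem_of_rknow hw hy hwky hsubj, ?_⟩
        intro hk
        exact hψnot (rknow_back a hw hy hwky hk)
      have huval : GammaAll u ⊆ u := gammaAll_iff.2 hugamma
      simp only [valSC, if_pos huval, if_neg hyval] at hunited
      norm_num at hunited
end

section
/- Soundness of the closure axiom: in every epistemic act-utilitarian branching-time model satisfying (OAC) and (Unif-H), the formula ⊙_S[α]φ → K_α□⊙_S[α]φ is valid: if agent α subjectively ought to see to φ at a situation ⟨m,h⟩, then at every situation epistemically indistinguishable from ⟨m,h⟩ and every history through its moment, α subjectively ought to see to φ. -/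
/-- An (epistemic act-utilitarian bi-valued) branching-time model, presented
through its moments, histories, incidence relation, choice structure, states,
epistemic relation on situations, value functions and valuation. -/
structure BTM (Ags : Type) where
  M : Type                                -- moments
  Hst : Type                              -- histories
  mem : M → Hst → Prop                    -- `m ∈ h`
  choice : Ags → M → Hst → Set Hst        -- `Choice^m_α(h)`
  cells : Ags → M → Set (Set Hst)         -- `Choice^m_α`
  states : Ags → M → Set (Set Hst)        -- `State^m_α`
  eps : Ags → M → Hst → M → Hst → Prop    -- `⟨m,h⟩ ∼_α ⟨m',h'⟩`
  valO : Hst → ℝ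
  valS : Hst → ℝ
  val : Nat → M → Hst → Prop

namespace BTM

variable {Ags : Type}

/-- Moment-level indistinguishability `m ∼_α m'`. -/
def mEps (B : BTM Ags) (a : Ags) (m m' : B.M) : Prop :=
  ∃ h h', B.mem m h ∧ B.mem m' h' ∧ B.eps a m h m' h'

/-- The epistemic cluster `[L]^{m'}_α` of a set `L` of histories at moment `m`,
taken at moment `m'`. -/
def cluster (B : BTM Ags) (a : Ags) (m : B.M) (L : Set B.Hst) (m' : B.M) :
    Set B.Hst :=
  {h' | B.mem m' h' ∧ ∃ h ∈ L, B.eps a m h m' h'}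

/-- Objective dominance `L ⪯ N` at moment `m` (relativized to states). -/
def domO (B : BTM Ags) (a : Ags) (m : B.M) (L N : Set B.Hst) : Prop :=
  ∀ S ∈ B.states a m, ∀ x ∈ L ∩ S, ∀ y ∈ N ∩ S, B.valO x ≤ B.valO y

/-- Strict objective dominance. -/
def sdomO (B : BTM Ags) (a : Ags) (m : B.M) (L N : Set B.Hst) : Prop :=
  B.domO a m L N ∧ ¬ B.domO a m N L

/-- Subjective dominance `L ⪯_s N` at moment `m`, via epistemic clusters. -/
def domS (B : BTM Ags) (a : Ags) (m : B.M) (L N : Set B.Hst) : Prop :=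
  ∀ m', B.mEps a m m' → ∀ S ∈ B.states a m',
    ∀ x ∈ B.cluster a m L m' ∩ S, ∀ y ∈ B.cluster a m N m' ∩ S,
      B.valS x ≤ B.valS y

/-- Strict subjective dominance. -/
def sdomS (B : BTM Ags) (a : Ags) (m : B.M) (L N : Set B.Hst) : Prop :=
  B.domS a m L N ∧ ¬ B.domS a m N L

/-- Satisfaction at a situation `⟨m,h⟩` (with the sure-thing-principle
semantics for the ought operators). -/
def sat (B : BTM Ags) : Form Ags → B.M → B.Hst → Prop
  | Form.atom n, m, h => B.val n m h
  | Form.bot, _, _ => False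
  | Form.imp φ ψ, m, h => sat B φ m h → sat B ψ m h
  | Form.box φ, m, _ => ∀ h', B.mem m h' → sat B φ m h'
  | Form.act a φ, m, h => ∀ h' ∈ B.choice a m h, sat B φ m h'
  | Form.know a φ, m, h => ∀ m' h', B.eps a m h m' h' → sat B φ m' h'
  | Form.obj a φ, m, _ =>
      ∀ L ∈ B.cells a m, (∃ hL ∈ L, ¬ sat B φ m hL) →
        ∃ L' ∈ B.cells a m, B.sdomO a m L L' ∧
          ∀ L'' ∈ B.cells a m, (L'' = L' ∨ B.domO a m L' L'') →
            ∀ h'' ∈ L'', sat B φ m h''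
  | Form.subj a φ, m, _ =>
      ∀ L ∈ B.cells a m,
        (∃ m', B.mEps a m m' ∧ ∃ hL ∈ B.cluster a m L m', ¬ sat B φ m' hL) →
          ∃ L' ∈ B.cells a m, B.sdomS a m L L' ∧
            ∀ L'' ∈ B.cells a m, (L'' = L' ∨ B.domS a m L' L'') →
              ∀ m'', B.mEps a m m'' →
                ∀ h'' ∈ B.cluster a m L'' m'', sat B φ m'' h''

end BTM

open BTM

/-! (OAC) lets `∼_α` relate whole choice cells: if one history of a cell at `m` is
indistinguishable from one of a cell at `m'`, every history of the first is
indistinguishable from every history of the second, so the two cells have the same epistemic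
clusters at every moment. By (Unif-H), when `m ∼_α m'` every cell at either moment has such a
counterpart at the other, and `m`, `m'` have the same `∼_α`-neighbourhood. Subjective dominance
and the subjective ought at a moment see the cells only through these clusters, so
`⊙_S[α]φ` holds at `m` exactly when it holds at `m'`, whatever the history. -/

namespace BTM

variable {Ags : Type} (B : BTM Ags) (a : Ags)

def EpsSymm : Prop :=
  ∀ m h m' h', B.eps a m h m' h' → B.eps a m' h' m h

def EpsTrans : Prop :=
  ∀ m h m' h' m'' h'', B.eps a m h m' h' → B.eps a m' h' m'' h'' → B.eps a m h m'' h''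

def OAC : Prop :=
  ∀ m h m' h', B.eps a m h m' h' → ∀ h₂ ∈ B.choice a m h, B.eps a m h₂ m' h'

def UnifH : Prop :=
  ∀ m h m' h', B.eps a m h m' h' → ∀ h₂, B.mem m h₂ → ∃ h₂', B.mem m' h₂' ∧ B.eps a m h₂ m' h₂'

def ClusterCounterparts (m m' : B.M) : Prop :=
  ∀ L' ∈ B.cells a m', ∃ L ∈ B.cells a m, ∀ m₂, B.cluster a m L m₂ = B.cluster a m' L' m₂

variable {B a}

theorem mEps_symm (hS : B.EpsSymm a) {m m' : B.M} : B.mEps a m m' → B.mEps a m' m :=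
  fun ⟨h, h', hh, hh', e⟩ => ⟨h', h, hh', hh, hS _ _ _ _ e⟩

theorem mEps_trans (hT : B.EpsTrans a) (hU : B.UnifH a) {m₁ m₂ m₃ : B.M}
    (h₁₂ : B.mEps a m₁ m₂) (h₂₃ : B.mEps a m₂ m₃) : B.mEps a m₁ m₃ := by
  obtain ⟨x, y, hx, hy, exy⟩ := h₁₂
  obtain ⟨u, v, -, -, euv⟩ := h₂₃
  obtain ⟨z, hz, eyz⟩ := hU _ _ _ _ euv y hy
  exact ⟨x, z, hx, hz, hT _ _ _ _ _ _ exy eyz⟩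

theorem mEps_iff_of_mEps (hS : B.EpsSymm a) (hT : B.EpsTrans a) (hU : B.UnifH a)
    {m m' : B.M} (hmm' : B.mEps a m m') (m₂ : B.M) : B.mEps a m m₂ ↔ B.mEps a m' m₂ :=
  ⟨mEps_trans hT hU (mEps_symm hS hmm'), mEps_trans hT hU hmm'⟩

theorem eps_of_mem_choice (hS : B.EpsSymm a) (hO : B.OAC a) {m m' : B.M} {h h' x x' : B.Hst}
    (e : B.eps a m h m' h') (hx : x ∈ B.choice a m h) (hx' : x' ∈ B.choice a m' h') :
    B.eps a m x m' x' :=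
  hS _ _ _ _ (hO _ _ _ _ (hS _ _ _ _ (hO _ _ _ _ e x hx)) x' hx')

theorem cluster_choice_eq (hS : B.EpsSymm a) (hT : B.EpsTrans a) (hO : B.OAC a)
    (hself : ∀ m h, B.mem m h → h ∈ B.choice a m h) {m m' : B.M} {h h' : B.Hst}
    (hh : B.mem m h) (hh' : B.mem m' h') (e : B.eps a m h m' h') (m₂ : B.M) :
    B.cluster a m (B.choice a m h) m₂ = B.cluster a m' (B.choice a m' h') m₂ := by
  ext k
  constructor
  · rintro ⟨hk, x, hx, exk⟩
    have ehx := eps_of_mem_choice hS hO e hx (hself m' h' hh')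
    exact ⟨hk, h', hself m' h' hh', hT _ _ _ _ _ _ (hS _ _ _ _ ehx) exk⟩
  · rintro ⟨hk, x', hx', exk⟩
    have ehx := eps_of_mem_choice hS hO e (hself m h hh) hx'
    exact ⟨hk, h, hself m h hh, hT _ _ _ _ _ _ ehx exk⟩

theorem clusterCounterparts_of_mEps (hS : B.EpsSymm a) (hT : B.EpsTrans a) (hO : B.OAC a)
    (hU : B.UnifH a) (hself : ∀ m h, B.mem m h → h ∈ B.choice a m h)
    (hcells : ∀ m, B.cells a m = {C | ∃ h, B.mem m h ∧ C = B.choice a m h})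
    {m m' : B.M} (hmm' : B.mEps a m m') : B.ClusterCounterparts a m m' := by
  obtain ⟨p, q, -, -, epq⟩ := hmm'
  intro L' hL'
  rw [hcells] at hL'
  obtain ⟨g', hg', rfl⟩ := hL'
  obtain ⟨g, hg, eg⟩ := hU _ _ _ _ (hS _ _ _ _ epq) g' hg'
  refine ⟨B.choice a m g, hcells m ▸ ⟨g, hg, rfl⟩, ?_⟩
  exact cluster_choice_eq hS hT hO hself hg hg' (hS _ _ _ _ eg)

theorem domS_congr {m m' : B.M} {P P' Q Q' : Set B.Hst}
    (hm : ∀ m₂, B.mEps a m m₂ ↔ B.mEps a m' m₂)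
    (hP : ∀ m₂, B.cluster a m P m₂ = B.cluster a m' P' m₂)
    (hQ : ∀ m₂, B.cluster a m Q m₂ = B.cluster a m' Q' m₂) :
    B.domS a m P Q ↔ B.domS a m' P' Q' := by
  simp only [domS, hm, hP, hQ]

theorem sdomS_congr {m m' : B.M} {P P' Q Q' : Set B.Hst}
    (hm : ∀ m₂, B.mEps a m m₂ ↔ B.mEps a m' m₂)
    (hP : ∀ m₂, B.cluster a m P m₂ = B.cluster a m' P' m₂)
    (hQ : ∀ m₂, B.cluster a m Q m₂ = B.cluster a m' Q' m₂) :
    B.sdomS a m P Q ↔ B.sdomS a m' P' Q' :=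
  and_congr (domS_congr hm hP hQ) (not_congr (domS_congr hm hQ hP))

theorem sat_subj_of_clusterCounterparts {φ : Form Ags} {m m' : B.M} {h h' : B.Hst}
    (hm : ∀ m₂, B.mEps a m m₂ ↔ B.mEps a m' m₂)
    (hfwd : B.ClusterCounterparts a m m') (hbwd : B.ClusterCounterparts a m' m)
    (hs : B.sat (.subj a φ) m h) : B.sat (.subj a φ) m' h' := by
  simp only [sat] at hs ⊢
  rintro L' hL' ⟨m₂, hm₂, k, hk, hkφ⟩
  obtain ⟨L, hL, hLL'⟩ := hfwd L' hL'
  obtain ⟨N, hN, hLN, hNopt⟩ := hs L hL ⟨m₂, (hm m₂).2 hm₂, k, (hLL' m₂) ▸ hk, hkφ⟩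
  obtain ⟨N', hN', hN'N⟩ := hbwd N hN
  have hNN' m₂ := (hN'N m₂).symm
  refine ⟨N', hN', (sdomS_congr hm hLL' hNN').1 hLN, ?_⟩
  rintro L'' hL'' hL''opt m₃ hm₃ k hk
  rcases hL''opt with rfl | hdom
  · exact hNopt N hN (Or.inl rfl) m₃ ((hm m₃).2 hm₃) k ((hNN' m₃) ▸ hk)
  · obtain ⟨L₂, hL₂, hL₂L''⟩ := hfwd L'' hL''
    exact hNopt L₂ hL₂ (Or.inr ((domS_congr hm hNN' hL₂L'').2 hdom)) m₃ ((hm m₃).2 hm₃) k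
      ((hL₂L'' m₃) ▸ hk)

end BTM

theorem statement19_general {Ags : Type} (B : BTM Ags) (a : Ags) (φ : Form Ags)
    (heps_symm : ∀ b m h m' h', B.eps b m h m' h' → B.eps b m' h' m h)
    (heps_trans : ∀ b m h m' h' m'' h'',
      B.eps b m h m' h' → B.eps b m' h' m'' h'' → B.eps b m h m'' h'')
    (heps_mem : ∀ b m h m' h', B.eps b m h m' h' → B.mem m h ∧ B.mem m' h')
    (hchoice_mem : ∀ b m h, B.mem m h → h ∈ B.choice b m h)
    (hcells : ∀ b m, B.cells b m = {C | ∃ h, B.mem m h ∧ C = B.choice b m h})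
    (hOAC : ∀ b m h m' h', B.eps b m h m' h' →
      ∀ h₂ ∈ B.choice b m h, B.eps b m h₂ m' h')
    (hUnif : ∀ b m h m' h', B.eps b m h m' h' →
      ∀ h₂, B.mem m h₂ → ∃ h₂', B.mem m' h₂' ∧ B.eps b m h₂ m' h₂')
    (m : B.M) (h : B.Hst) :
    B.sat (Form.imp (Form.subj a φ)
      (Form.know a (Form.box (Form.subj a φ)))) m h := by
  intro hsubj m' h' he h'' _
  obtain ⟨hmem, hmem'⟩ := heps_mem a m h m' h' he
  have hmm' : B.mEps a m m' := ⟨h, h', hmem, hmem', he⟩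
  have counterparts {m₁ m₂ : B.M} : B.mEps a m₁ m₂ → B.ClusterCounterparts a m₁ m₂ :=
    clusterCounterparts_of_mEps (heps_symm a) (heps_trans a) (hOAC a) (hUnif a)
      (hchoice_mem a) (hcells a)
  exact sat_subj_of_clusterCounterparts
    (mEps_iff_of_mEps (heps_symm a) (heps_trans a) (hUnif a) hmm')
    (counterparts hmm') (counterparts (mEps_symm (heps_symm a) hmm')) hsubj

/-- Soundness of the closure axiom `(Cl)`: in every epistemic act-utilitarian
branching-time model satisfying (OAC) and (Unif-H) (with `∼_α` an equivalence
on situations and the choice structure a partition of the histories through a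
moment), the formula `⊙_S[α]φ → K_α□⊙_S[α]φ` is true at every situation. -/
theorem statement19 {Ags : Type} (B : BTM Ags) (a : Ags) (φ : Form Ags)
    (heps_refl : ∀ b m h, B.mem m h → B.eps b m h m h)
    (heps_symm : ∀ b m h m' h', B.eps b m h m' h' → B.eps b m' h' m h)
    (heps_trans : ∀ b m h m' h' m'' h'',
      B.eps b m h m' h' → B.eps b m' h' m'' h'' → B.eps b m h m'' h'')
    (heps_mem : ∀ b m h m' h', B.eps b m h m' h' → B.mem m h ∧ B.mem m' h')
    (hchoice_mem : ∀ b m h, B.mem m h → h ∈ B.choice b m h)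
    (hchoice_sub : ∀ b m h, B.choice b m h ⊆ {h' | B.mem m h'})
    (hchoice_eq : ∀ b m h h', B.mem m h → h' ∈ B.choice b m h →
      B.choice b m h' = B.choice b m h)
    (hcells : ∀ b m, B.cells b m = {C | ∃ h, B.mem m h ∧ C = B.choice b m h})
    (hOAC : ∀ b m h m' h', B.eps b m h m' h' →
      ∀ h₂ ∈ B.choice b m h, B.eps b m h₂ m' h')
    (hUnif : ∀ b m h m' h', B.eps b m h m' h' →
      ∀ h₂, B.mem m h₂ → ∃ h₂', B.mem m' h₂' ∧ B.eps b m h₂ m' h₂')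
    (m : B.M) (h : B.Hst) (hmh : B.mem m h) :
    B.sat (Form.imp (Form.subj a φ)
      (Form.know a (Form.box (Form.subj a φ)))) m h :=
  statement19_general B a φ heps_symm heps_trans heps_mem hchoice_mem hcells hOAC hUnif m h
end
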